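/- Let α > −1 be a real number, i ≥ 1 an integer, and x a real number. Then, as β → ∞ (along the reals), (β^{i−1}/(−2)^i) · b_i(α,β,1−2x/β) tends to Σ_{ℓ=0}^{i−1} [(α+3)_{i−ℓ−1} (−α−2)_{i−ℓ−1} (−α−1)_ℓ / (i! (i−ℓ−1)! ℓ!)] (−x)^{ℓ+1}. -/

import Mathlib

/-- The Pochhammer symbol (rising factorial) `(a)_k = a (a+1) ⋯ (a+k-1)`. -/
noncomputable def poch (a : ℝ) (k : ℕ) : ℝ := (ascPochhammer ℝ k).eval a

/-- The coefficient `b_i(α,β,x)` of the differential equation: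
`b_i(α,β,x) = (α+β+2) (−2)^i Σ_{ℓ=0}^{i−1} [(α+3)_{i−ℓ−1} (−α−2)_{i−ℓ−1} /`
`((β+1)_{i−ℓ−1} (i−ℓ)! (i−ℓ−1)! ℓ!)] ₃F₂(−ℓ,α+β+3,α+i−ℓ+2;β+i−ℓ,i−ℓ+1;1) ((x−1)/2)^{ℓ+1}`. -/
noncomputable def bCoef (α β : ℝ) (i : ℕ) (x : ℝ) : ℝ :=
  (α + β + 2) * (-2 : ℝ) ^ i *
    ∑ ℓ ∈ Finset.range i,
      poch (α + 3) (i - ℓ - 1) * poch (-α - 2) (i - ℓ - 1) /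
        (poch (β + 1) (i - ℓ - 1) * Nat.factorial (i - ℓ) * Nat.factorial (i - ℓ - 1) *
          Nat.factorial ℓ) *
      (∑ m ∈ Finset.range (ℓ + 1),
        poch (-(ℓ : ℝ)) m * poch (α + β + 3) m * poch (α + (i : ℝ) - (ℓ : ℝ) + 2) m /
          (poch (β + (i : ℝ) - (ℓ : ℝ)) m * poch ((i : ℝ) - (ℓ : ℝ) + 1) m *
            Nat.factorial m)) *
      ((x - 1) / 2) ^ (ℓ + 1)

open Filter Finset

lemma poch_succ (a : ℝ) (k : ℕ) : poch a (k+1) = poch a k * (a + k) :=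
  ascPochhammer_succ_eval k a
lemma poch_succ_left (a : ℝ) (k : ℕ) : poch a (k+1) = a * poch (a+1) k := by
  simp [poch, ascPochhammer_succ_left, Polynomial.eval_comp]
lemma poch_add (a : ℝ) (p q : ℕ) : poch a (p+q) = poch a p * poch (a+p) q := by
  have h := congrArg (Polynomial.eval a) (ascPochhammer_mul ℝ p q)
  simpa [poch, Polynomial.eval_comp] using h.symm
lemma poch_one_eq_factorial (n : ℕ) : poch 1 n = n.factorial := by
  simpa [poch] using ascPochhammer_eval_one ℝ n
lemma poch_pos {a : ℝ} (ha : 0 < a) (k : ℕ) : 0 < poch a k := ascPochhammer_pos k a ha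
lemma poch_neg_nat (ℓ m : ℕ) : poch (-(ℓ:ℝ)) m = (-1)^m * (m.factorial * ℓ.choose m) := by
  rw [poch, ascPochhammer_eval_neg_eq_descPochhammer]
  norm_num [descPochhammer_eval_eq_descFactorial, Nat.descFactorial_eq_factorial_mul_choose]
lemma poch_prod (a : ℝ) (k : ℕ) : poch a k = ∏ j ∈ Finset.range k, (a + j) := by
  induction k with
  | zero => simp [poch]
  | succ n ih => rw [poch, ascPochhammer_succ_eval, ← poch, ih, Finset.prod_range_succ]

lemma tendsto_linear_ratio (u v : ℝ) :
    Tendsto (fun β : ℝ => (β + u) / (β + v)) atTop (nhds 1) := by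
  have h1 : Tendsto (fun β : ℝ => 1 + (u - v) / (β + v)) atTop (nhds 1) := by
    have : Tendsto (fun β : ℝ => (u - v) / (β + v)) atTop (nhds 0) := by
      apply Tendsto.div_atTop tendsto_const_nhds
      exact tendsto_atTop_add_const_right _ v tendsto_id
    simpa using tendsto_const_nhds.add this
  apply h1.congr'
  filter_upwards [eventually_gt_atTop (-v)] with β hβ
  have hv : β + v ≠ 0 := by linarith
  field_simp
  ring

lemma tendsto_prod_linear_ratio (u v : ℕ → ℝ) (k : ℕ) :
    Tendsto (fun β : ℝ => ∏ j ∈ Finset.range k, ((β + u j) / (β + v j))) atTop (nhds 1) := by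
  have h : Tendsto (fun β : ℝ => ∏ j ∈ Finset.range k, ((β + u j) / (β + v j))) atTop
      (nhds (∏ _j ∈ Finset.range k, (1:ℝ))) := by
    apply tendsto_finset_prod
    intro j _
    exact tendsto_linear_ratio (u j) (v j)
  simpa using h

lemma tendsto_poch_ratio (u v : ℝ) (k : ℕ) :
    Tendsto (fun β : ℝ => poch (β + u) k / poch (β + v) k) atTop (nhds 1) := by
  have heq : ∀ β : ℝ, poch (β + u) k / poch (β + v) k
      = ∏ j ∈ Finset.range k, ((β + (u + j)) / (β + (v + j))) := by
    intro β
    rw [poch_prod, poch_prod, ← Finset.prod_div_distrib]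
    exact Finset.prod_congr rfl fun j _ => by ring_nf
  simp only [heq]
  exact tendsto_prod_linear_ratio _ _ k

lemma tendsto_pow_div_poch (v : ℝ) (k : ℕ) :
    Tendsto (fun β : ℝ => β ^ k / poch (β + v) k) atTop (nhds 1) := by
  have heq : ∀ β : ℝ, β ^ k / poch (β + v) k
      = ∏ j ∈ Finset.range k, ((β + 0) / (β + (v + j))) := by
    intro β
    rw [poch_prod, Finset.prod_div_distrib]
    simp only [add_zero, Finset.prod_const, Finset.card_range]
    congr 1
    exact Finset.prod_congr rfl fun j _ => by ring_nf
  simp only [heq]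
  exact tendsto_prod_linear_ratio _ _ k

lemma vandermonde (b : ℝ) : ∀ (ℓ : ℕ) (c : ℝ),
    ∑ m ∈ Finset.range (ℓ+1),
      (ℓ.choose m : ℝ) * (-1)^m * poch b m * poch (c + m) (ℓ - m) = poch (c - b) ℓ := by
  intro ℓ
  induction ℓ with
  | zero => intro c; simp [poch]
  | succ ℓ IH =>
    intro c
    set t : ℕ → ℝ := fun m => (-1)^m * poch b m * poch (c + m) (ℓ + 1 - m) with ht
    have hS : ∑ m ∈ Finset.range (ℓ+2), ((ℓ+1).choose m : ℝ) * (-1)^m * poch b m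
        * poch (c + m) (ℓ + 1 - m)
        = ∑ m ∈ Finset.range (ℓ+1), (ℓ.choose m : ℝ) * (t m + t (m+1)) := by
      have e1 : ∑ m ∈ Finset.range (ℓ+2), ((ℓ+1).choose m : ℝ) * (-1)^m * poch b m
          * poch (c + m) (ℓ + 1 - m) = ∑ m ∈ Finset.range (ℓ+2), ((ℓ+1).choose m : ℝ) * t m := by
        exact Finset.sum_congr rfl fun m _ => by simp [ht]; ring
      rw [e1, Finset.sum_range_succ']
      have e2 : ∀ m ∈ Finset.range (ℓ+1), ((ℓ+1).choose (m+1) : ℝ) * t (m+1)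
          = (ℓ.choose m : ℝ) * t (m+1) + (ℓ.choose (m+1) : ℝ) * t (m+1) := by
        intro m _
        rw [Nat.choose_succ_succ]
        push_cast
        ring
      rw [Finset.sum_congr rfl e2, Finset.sum_add_distrib]
      have e3 : ∑ m ∈ Finset.range (ℓ+1), (ℓ.choose (m+1) : ℝ) * t (m+1)
          = ∑ m ∈ Finset.range (ℓ+1), (ℓ.choose m : ℝ) * t m - (ℓ.choose 0 : ℝ) * t 0 := by
        have := Finset.sum_range_succ' (fun m => (ℓ.choose m : ℝ) * t m) (ℓ+1)
        rw [Finset.sum_range_succ (fun m => (ℓ.choose m : ℝ) * t m) (ℓ+1)] at this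
        simp only [Nat.choose_succ_self, Nat.cast_zero, zero_mul, add_zero] at this
        linarith [this]
      rw [e3]
      simp only [Nat.choose_zero_right, Nat.cast_one, one_mul, mul_add,
        Finset.sum_add_distrib]
      ring
    rw [hS]
    have key : ∀ m ∈ Finset.range (ℓ+1), (ℓ.choose m : ℝ) * (t m + t (m+1))
        = (c - b) * ((ℓ.choose m : ℝ) * (-1)^m * poch b m * poch ((c+1) + m) (ℓ - m)) := by
      intro m hm
      have hmℓ : m ≤ ℓ := Nat.lt_succ_iff.mp (Finset.mem_range.mp hm)
      have h1 : ℓ + 1 - m = (ℓ - m) + 1 := by omega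
      have h2 : ℓ + 1 - (m+1) = ℓ - m := by omega
      have h3 : poch (c + m) (ℓ + 1 - m) = (c + m) * poch ((c+1) + m) (ℓ - m) := by
        rw [h1, poch_succ_left]
        ring_nf
      have h4 : poch (c + ((m+1 : ℕ) : ℝ)) (ℓ + 1 - (m+1)) = poch ((c+1) + m) (ℓ - m) := by
        rw [h2]
        congr 1
        push_cast
        ring
      simp only [ht, poch_succ b m, h3]
      push_cast [h4]
      ring
    rw [Finset.sum_congr rfl key, ← Finset.mul_sum, IH (c+1)]
    have : c + 1 - b = (c - b) + 1 := by ring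
    rw [this, ← poch_succ_left]

noncomputable def Dc (α : ℝ) (i ℓ m : ℕ) : ℝ :=
  poch (-(ℓ:ℝ)) m * poch (α + (i:ℝ) - (ℓ:ℝ) + 2) m /
    (poch ((i:ℝ) - (ℓ:ℝ) + 1) m * Nat.factorial m)

lemma sum_Dc (α : ℝ) {i ℓ : ℕ} (hℓ : ℓ < i) :
    ∑ m ∈ Finset.range (ℓ+1), Dc α i ℓ m
      = poch (-α-1) ℓ * (Nat.factorial (i-ℓ)) / (Nat.factorial i) := by
  have hle : ℓ ≤ i := hℓ.le
  set c : ℝ := ((i-ℓ : ℕ) : ℝ) + 1 with hc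
  have hcpos : 0 < c := by positivity
  have hcc : (i:ℝ) - (ℓ:ℝ) + 1 = c := by rw [hc, Nat.cast_sub hle]
  have hb : α + (i:ℝ) - (ℓ:ℝ) + 2 = (α + c) + 1 := by rw [hc, Nat.cast_sub hle]; ring
  have hpoch_c_ℓ : poch c ℓ * (Nat.factorial (i-ℓ) : ℝ) = (Nat.factorial i : ℝ) := by
    have h1 : poch 1 ((i-ℓ) + ℓ) = poch 1 (i-ℓ) * poch (1 + ((i-ℓ:ℕ):ℝ)) ℓ := poch_add 1 (i-ℓ) ℓ
    have h2 : (i - ℓ) + ℓ = i := by omega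
    have h3 : (1:ℝ) + ((i-ℓ:ℕ):ℝ) = c := by rw [hc]; ring
    rw [h2, h3, poch_one_eq_factorial, poch_one_eq_factorial] at h1
    rw [h1]; ring
  have key : ∀ m ∈ Finset.range (ℓ+1), Dc α i ℓ m
      = (ℓ.choose m : ℝ) * (-1)^m * poch ((α+c)+1) m * poch (c + m) (ℓ - m) / poch c ℓ := by
    intro m hm
    have hmle : m ≤ ℓ := Nat.lt_succ_iff.mp (Finset.mem_range.mp hm)
    have hsplit : poch c ℓ = poch c m * poch (c + m) (ℓ - m) := by
      rw [← poch_add]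
      congr 1
      omega
    have hpm : poch c m ≠ 0 := (poch_pos hcpos m).ne'
    have hq : poch (c+m) (ℓ-m) ≠ 0 := (poch_pos (by positivity) _).ne'
    have hf : (Nat.factorial m : ℝ) ≠ 0 := Nat.cast_ne_zero.mpr m.factorial_ne_zero
    rw [Dc, poch_neg_nat, hcc, hb, hsplit]
    field_simp
  rw [Finset.sum_congr rfl key, ← Finset.sum_div, vandermonde ((α+c)+1) ℓ c]
  have h5 : c - ((α+c)+1) = -α-1 := by ring
  rw [h5]
  have hpc : poch c ℓ ≠ 0 := (poch_pos hcpos ℓ).ne'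
  have hfi : (Nat.factorial i : ℝ) ≠ 0 := Nat.cast_ne_zero.mpr i.factorial_ne_zero
  rw [div_eq_iff hpc, div_mul_eq_mul_div, eq_div_iff hfi, ← hpoch_c_ℓ]
  ring

noncomputable def Kc (α : ℝ) (i ℓ : ℕ) : ℝ :=
  poch (α + 3) (i - ℓ - 1) * poch (-α - 2) (i - ℓ - 1) /
    (Nat.factorial (i - ℓ) * Nat.factorial (i - ℓ - 1) * Nat.factorial ℓ)

noncomputable def Rf (α : ℝ) (i ℓ : ℕ) (β : ℝ) : ℝ :=
  (β + (α + 2)) / (β + 0) * (β ^ (i - ℓ - 1) / poch (β + 1) (i - ℓ - 1))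

noncomputable def Sf (α : ℝ) (i ℓ : ℕ) (β : ℝ) : ℝ :=
  ∑ m ∈ Finset.range (ℓ + 1),
    Dc α i ℓ m * (poch (β + (α + 3)) m / poch (β + ((i:ℝ) - (ℓ:ℝ))) m)


/-- as `β → ∞`,
`(β^{i−1}/(−2)^i) b_i(α,β,1−2x/β)` tends to
`Σ_{ℓ=0}^{i−1} [(α+3)_{i−ℓ−1} (−α−2)_{i−ℓ−1} (−α−1)_ℓ / (i! (i−ℓ−1)! ℓ!)] (−x)^{ℓ+1}`. -/
theorem bCoef_limit (α : ℝ) (hα : -1 < α) (i : ℕ) (hi : 1 ≤ i) (x : ℝ) :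
    Filter.Tendsto
      (fun β : ℝ => β ^ (i - 1) / (-2 : ℝ) ^ i * bCoef α β i (1 - 2 * x / β))
      Filter.atTop
      (nhds (∑ ℓ ∈ Finset.range i,
        poch (α + 3) (i - ℓ - 1) * poch (-α - 2) (i - ℓ - 1) * poch (-α - 1) ℓ /
          (Nat.factorial i * Nat.factorial (i - ℓ - 1) * Nat.factorial ℓ) *
          (-x) ^ (ℓ + 1))) := by
  have hg : Tendsto (fun β : ℝ => ∑ ℓ ∈ Finset.range i,
      Kc α i ℓ * Rf α i ℓ β * Sf α i ℓ β * (-x) ^ (ℓ + 1)) atTop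
      (nhds (∑ ℓ ∈ Finset.range i,
        Kc α i ℓ * 1 * (∑ m ∈ Finset.range (ℓ+1), Dc α i ℓ m * 1) * (-x) ^ (ℓ + 1))) := by
    apply tendsto_finset_sum
    intro ℓ _
    have hR : Tendsto (Rf α i ℓ) atTop (nhds 1) := by
      have h := (tendsto_linear_ratio (α + 2) 0).mul (tendsto_pow_div_poch 1 (i - ℓ - 1))
      rw [mul_one] at h
      exact h
    have hS : Tendsto (Sf α i ℓ) atTop
        (nhds (∑ m ∈ Finset.range (ℓ+1), Dc α i ℓ m * 1)) := by
      apply tendsto_finset_sum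
      intro m _
      exact tendsto_const_nhds.mul (tendsto_poch_ratio (α + 3) ((i:ℝ) - (ℓ:ℝ)) m)
    exact ((tendsto_const_nhds.mul hR).mul hS).mul tendsto_const_nhds
  have hval : (∑ ℓ ∈ Finset.range i,
        Kc α i ℓ * 1 * (∑ m ∈ Finset.range (ℓ+1), Dc α i ℓ m * 1) * (-x) ^ (ℓ + 1))
      = ∑ ℓ ∈ Finset.range i,
        poch (α + 3) (i - ℓ - 1) * poch (-α - 2) (i - ℓ - 1) * poch (-α - 1) ℓ /
          (Nat.factorial i * Nat.factorial (i - ℓ - 1) * Nat.factorial ℓ) *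
          (-x) ^ (ℓ + 1) := by
    apply Finset.sum_congr rfl
    intro ℓ hℓ
    have hℓi : ℓ < i := Finset.mem_range.mp hℓ
    simp only [mul_one]
    rw [sum_Dc α hℓi, Kc]
    have h1 : (Nat.factorial (i - ℓ) : ℝ) ≠ 0 := Nat.cast_ne_zero.mpr (i-ℓ).factorial_ne_zero
    have h2 : (Nat.factorial (i - ℓ - 1) : ℝ) ≠ 0 := Nat.cast_ne_zero.mpr (i-ℓ-1).factorial_ne_zero
    have h3 : (Nat.factorial ℓ : ℝ) ≠ 0 := Nat.cast_ne_zero.mpr ℓ.factorial_ne_zero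
    have h4 : (Nat.factorial i : ℝ) ≠ 0 := Nat.cast_ne_zero.mpr i.factorial_ne_zero
    field_simp
  rw [← hval]
  apply hg.congr'
  filter_upwards [eventually_gt_atTop 0] with β hβ
  have hβ0 : β ≠ 0 := hβ.ne'
  rw [bCoef, ← mul_assoc, Finset.mul_sum]
  apply Finset.sum_congr rfl
  intro ℓ hℓ
  have hℓi : ℓ < i := Finset.mem_range.mp hℓ
  have inner_eq : (∑ m ∈ Finset.range (ℓ + 1),
      poch (-(ℓ : ℝ)) m * poch (α + β + 3) m * poch (α + (i : ℝ) - (ℓ : ℝ) + 2) m /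
        (poch (β + (i : ℝ) - (ℓ : ℝ)) m * poch ((i : ℝ) - (ℓ : ℝ) + 1) m *
          Nat.factorial m)) = Sf α i ℓ β := by
    apply Finset.sum_congr rfl
    intro m _
    have e1 : α + β + 3 = β + (α + 3) := by ring
    have e2 : β + (i:ℝ) - (ℓ:ℝ) = β + ((i:ℝ) - (ℓ:ℝ)) := by ring
    rw [e1, e2, Dc]
    ring
  rw [inner_eq, Kc, Rf]
  have hN : poch (β + 1) (i - ℓ - 1) ≠ 0 := (poch_pos (by linarith) _).ne'
  have h2i : ((-2 : ℝ)) ^ i ≠ 0 := pow_ne_zero _ (by norm_num)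
  have h1 : (Nat.factorial (i - ℓ) : ℝ) ≠ 0 := Nat.cast_ne_zero.mpr (i-ℓ).factorial_ne_zero
  have h2 : (Nat.factorial (i - ℓ - 1) : ℝ) ≠ 0 := Nat.cast_ne_zero.mpr (i-ℓ-1).factorial_ne_zero
  have h3 : (Nat.factorial ℓ : ℝ) ≠ 0 := Nat.cast_ne_zero.mpr ℓ.factorial_ne_zero
  have e3 : (1 - 2 * x / β - 1) / 2 = -x / β := by ring
  have e4 : i - 1 = ℓ + (i - ℓ - 1) := by omega
  rw [e3, div_pow, e4, pow_add, pow_succ]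
  field_simp
  ring
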